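/- For any nonzero vector v ∈ 𝔽₂ⁿ, the map y ↦ T_y · v from 𝔽₂^{n+m-1} to 𝔽₂ᵐ (sending the defining vector y of an m × n Toeplitz matrix to the matrix-vector product with v) is a surjective 𝔽₂-linear map; in particular exactly 2^{n-1} of the 2^{n+m-1} vectors y satisfy T_y · v = 0. -/

import Mathlib

/-!
Let `j₀` be the last index with `v j₀ ≠ 0`. The image of the unit seed at position
`n - 1 - j₀ + i'` has `i'`-th coordinate `v j₀` and vanishes at every row `i > i'`, since
that row would need `v` at an index beyond `j₀`. These `m` images therefore form an upper
triangular matrix with unit diagonal, so they span `𝔽₂ᵐ`; the count of seeds with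
`T_y · v = 0` then follows from rank–nullity.
-/

/-- The `m × n` Toeplitz matrix over `𝔽₂` determined by `y ∈ 𝔽₂^{n+m-1}`,
with `(T_y)_{i,j} = y_{i-j}` after re-indexing `y` by `k ↦ k - (n-1)`. -/
def toeplitz (n m : ℕ) (y : Fin (n + m - 1) → ZMod 2) :
    Matrix (Fin m) (Fin n) (ZMod 2) :=
  Matrix.of fun i j => y ⟨n - 1 + i.val - j.val, by omega⟩

def toeplitzSeedMap (n m : ℕ) (v : Fin n → ZMod 2) :
    (Fin (n + m - 1) → ZMod 2) →ₗ[ZMod 2] (Fin m → ZMod 2) where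
  toFun y := (toeplitz n m y).mulVec v
  map_add' y₁ y₂ := Matrix.add_mulVec (toeplitz n m y₁) (toeplitz n m y₂) v
  map_smul' c y := Matrix.smul_mulVec c (toeplitz n m y) v

lemma toeplitzSeedMap_apply {n m : ℕ} (v : Fin n → ZMod 2) (y : Fin (n + m - 1) → ZMod 2) :
    toeplitzSeedMap n m v y = (toeplitz n m y).mulVec v :=
  rfl

lemma exists_last_ne_zero {ι M : Type*} [Fintype ι] [LinearOrder ι] [Zero M]
    {v : ι → M} (hv : v ≠ 0) : ∃ j, v j ≠ 0 ∧ ∀ j', j < j' → v j' = 0 := by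
  classical
  obtain ⟨j, hj, hmax⟩ := (Finset.univ.filter fun j => v j ≠ 0).exists_max_image id
    (Finset.filter_nonempty_iff.2 (by simpa [funext_iff] using hv))
  refine ⟨j, (Finset.mem_filter.1 hj).2, fun j' hj' => ?_⟩
  by_contra hne
  exact (hmax j' (by simpa using hne)).not_gt hj'

lemma LinearMap.surjective_of_col_mem_range {ι R M : Type*} [Fintype ι] [DecidableEq ι]
    [CommRing R] [AddCommGroup M] [Module R M] (f : M →ₗ[R] (ι → R)) (B : Matrix ι ι R)
    (hB : IsUnit B.det) (hcol : ∀ j, B.col j ∈ LinearMap.range f) :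
    Function.Surjective f := by
  have hBsurj : Function.Surjective B.mulVec :=
    Matrix.mulVec_surjective_iff_isUnit.2 ((Matrix.isUnit_iff_isUnit_det B).2 hB)
  rw [← LinearMap.range_eq_top, eq_top_iff,
    ← (LinearMap.range_eq_top (f := B.mulVecLin)).2 hBsurj, Matrix.range_mulVecLin,
    Submodule.span_le]
  rintro _ ⟨j, rfl⟩
  exact hcol j

lemma LinearMap.card_filter_eq_zero_of_surjective {K ι κ : Type*} [Field K] [Fintype K]
    [DecidableEq K] [Fintype ι] [Fintype κ] [DecidableEq ι] (f : (ι → K) →ₗ[K] (κ → K))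
    (hf : Function.Surjective f) :
    (Finset.univ.filter fun x => f x = 0).card =
      Fintype.card K ^ (Fintype.card ι - Fintype.card κ) := by
  have hrank := f.finrank_range_add_finrank_ker
  rw [LinearMap.range_eq_top.2 hf, finrank_top, Module.finrank_fintype_fun_eq_card,
    Module.finrank_fintype_fun_eq_card] at hrank
  rw [← Fintype.card_subtype, ← Nat.card_eq_fintype_card, ← Nat.card_eq_fintype_card]
  change Nat.card (LinearMap.ker f) = _
  rw [Module.natCard_eq_pow_finrank (K := K)]
  congr 1
  omega

lemma toeplitzSeedMap_single_apply {n m : ℕ} (v : Fin n → ZMod 2) (k : Fin (n + m - 1))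
    (i : Fin m) :
    toeplitzSeedMap n m v (Pi.single k 1) i =
      ∑ j : Fin n, if k.val + j.val = n - 1 + i.val then v j else 0 := by
  rw [toeplitzSeedMap_apply, Matrix.mulVec, dotProduct]
  refine Finset.sum_congr rfl fun j _ => ?_
  have hj := j.isLt
  simp only [toeplitz, Matrix.of_apply, Pi.single_apply, Fin.ext_iff, ite_mul, one_mul, zero_mul]
  exact if_congr (by omega) rfl rfl

lemma toeplitzSeedMap_surjective {n m : ℕ} {v : Fin n → ZMod 2} (hv : v ≠ 0) :
    Function.Surjective (toeplitzSeedMap n m v) := by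
  obtain ⟨j₀, hj₀, hlast⟩ := exists_last_ne_zero hv
  let seed (i : Fin m) : Fin (n + m - 1) := ⟨n - 1 - j₀ + i, by omega⟩
  let B : Matrix (Fin m) (Fin m) (ZMod 2) :=
    Matrix.of fun i i' => toeplitzSeedMap n m v (Pi.single (seed i') 1) i
  have hdiag (i : Fin m) : B i i = v j₀ := by
    have hseed (j : Fin n) : (seed i).val + j.val = n - 1 + i.val ↔ j = j₀ := by
      simp only [seed, Fin.ext_iff]
      omega
    simp only [B, Matrix.of_apply, toeplitzSeedMap_single_apply, hseed,
      Finset.sum_ite_eq', Finset.mem_univ, if_true]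
  have htri : B.IsUpperTriangular := by
    intro i i' hlt
    simp only [B, Matrix.of_apply, toeplitzSeedMap_single_apply]
    refine Finset.sum_eq_zero fun j _ => ite_eq_right_iff.2 fun hj => hlast j ?_
    simp only [seed, id] at hj hlt ⊢
    omega
  refine LinearMap.surjective_of_col_mem_range _ B ?_ fun i' => ⟨_, rfl⟩
  rw [Matrix.det_of_isUpperTriangular htri, Finset.prod_congr rfl fun i _ => hdiag i,
    Finset.prod_const]
  exact (isUnit_iff_ne_zero.2 hj₀).pow _

theorem toeplitz_seed_map_surjective_general (n m : ℕ)
    (v : Fin n → ZMod 2) (hv : v ≠ 0) :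
    IsLinearMap (ZMod 2)
        (fun y : Fin (n + m - 1) → ZMod 2 => (toeplitz n m y).mulVec v) ∧
    Function.Surjective
        (fun y : Fin (n + m - 1) → ZMod 2 => (toeplitz n m y).mulVec v) ∧
    (Finset.univ.filter fun y : Fin (n + m - 1) → ZMod 2 =>
        (toeplitz n m y).mulVec v = 0).card = 2 ^ (n - 1) := by
  have hsurj := toeplitzSeedMap_surjective (m := m) hv
  refine ⟨(toeplitzSeedMap n m v).isLinear, hsurj, ?_⟩
  have hcard := LinearMap.card_filter_eq_zero_of_surjective _ hsurj
  simp only [toeplitzSeedMap_apply, ZMod.card, Fintype.card_fin] at hcard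
  obtain ⟨j, -⟩ := Function.ne_iff.1 hv
  rw [show n + m - 1 - m = n - 1 by have := j.pos; omega] at hcard
  rw [← hcard]
  congr

/-- For any nonzero `v ∈ 𝔽₂ⁿ`, the map `y ↦ T_y · v` is a surjective `𝔽₂`-linear
map from `𝔽₂^{n+m-1}` to `𝔽₂ᵐ`; in particular exactly `2^{n-1}` of the
`2^{n+m-1}` seeds `y` satisfy `T_y · v = 0`. -/
theorem toeplitz_seed_map_surjective (n m : ℕ) (hn : 1 ≤ n) (hm : 1 ≤ m)
    (v : Fin n → ZMod 2) (hv : v ≠ 0) :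
    IsLinearMap (ZMod 2)
        (fun y : Fin (n + m - 1) → ZMod 2 => (toeplitz n m y).mulVec v) ∧
    Function.Surjective
        (fun y : Fin (n + m - 1) → ZMod 2 => (toeplitz n m y).mulVec v) ∧
    (Finset.univ.filter fun y : Fin (n + m - 1) → ZMod 2 =>
        (toeplitz n m y).mulVec v = 0).card = 2 ^ (n - 1) :=
  toeplitz_seed_map_surjective_general n m v hv
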